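/- arXiv:2107.09994 — 5 statements merged into one kernel-verified Lean document; each statement's English description precedes it below -/
import Mathlib

section
/- Let F be a class of simple finite graphs closed under taking subgraphs. If every graph G in F satisfies χ''(G) ≤ Δ(G) + 2 (i.e., the Total Coloring Conjecture holds for F), then every total graph T(G) with G in F satisfies Hadwiger's conjecture, i.e., χ(T(G)) ≤ η(T(G)). -/
open SimpleGraph

/-- The total graph `T(G)` of a simple graph `G`: its vertices are the vertices and edges
of `G`, with two elements adjacent iff they are adjacent or incident in `G`. -/
def totalGraph {V : Type*} (G : SimpleGraph V) : SimpleGraph (V ⊕ G.edgeSet) :=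
  SimpleGraph.fromRel fun x y =>
    match x, y with
    | Sum.inl u, Sum.inl v => G.Adj u v
    | Sum.inl u, Sum.inr e => u ∈ (e : Sym2 V)
    | Sum.inr e, Sum.inl u => u ∈ (e : Sym2 V)
    | Sum.inr e, Sum.inr f => ∃ u, u ∈ (e : Sym2 V) ∧ u ∈ (f : Sym2 V)

/-- `cv`, `ce` form a total coloring of `G`: adjacent vertices get distinct colors, edges
sharing an endpoint get distinct colors, and every edge gets a color distinct from the colors
of both of its endpoints. -/
def IsTotalColoring {V : Type*} (G : SimpleGraph V) (cv : V → ℕ) (ce : Sym2 V → ℕ) : Prop :=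
  (∀ ⦃u v⦄, G.Adj u v → cv u ≠ cv v) ∧
  (∀ ⦃u v w⦄, G.Adj u v → G.Adj u w → v ≠ w → ce s(u, v) ≠ ce s(u, w)) ∧
  (∀ ⦃u v⦄, G.Adj u v → ce s(u, v) ≠ cv u ∧ ce s(u, v) ≠ cv v)

/-- The total chromatic number `χ''(G)`: the least `k` such that `G` has a total coloring
using colors `0, …, k-1`. -/
noncomputable def totalChromaticNumber {V : Type*} (G : SimpleGraph V) : ℕ :=
  sInf {k | ∃ cv ce, IsTotalColoring G cv ce ∧ (∀ v, cv v < k) ∧ ∀ e ∈ G.edgeSet, ce e < k}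

/-- `H` has a minor isomorphic to `K`: there are pairwise disjoint nonempty branch sets,
one for each vertex of `K`, each inducing a connected subgraph of `H`, with an edge of `H`
between the branch sets of any two adjacent vertices of `K`. -/
def HasMinor {W U : Type*} (H : SimpleGraph W) (K : SimpleGraph U) : Prop :=
  ∃ B : U → Set W,
    (∀ i, (B i).Nonempty) ∧
    (Pairwise fun i j => Disjoint (B i) (B j)) ∧
    (∀ i, (H.induce (B i)).Connected) ∧
    ∀ ⦃i j⦄, K.Adj i j → ∃ u ∈ B i, ∃ v ∈ B j, H.Adj u v

/-- `H` has a clique minor of order `t` (a `K_t`-minor): `t` pairwise disjoint nonempty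
vertex subsets, each inducing a connected subgraph, with an edge between every pair. -/
def HasCliqueMinor {W : Type*} (H : SimpleGraph W) (t : ℕ) : Prop :=
  ∃ B : Fin t → Set W,
    (∀ i, (B i).Nonempty) ∧
    (Pairwise fun i j => Disjoint (B i) (B j)) ∧
    (∀ i, (H.induce (B i)).Connected) ∧
    Pairwise fun i j => ∃ u ∈ B i, ∃ v ∈ B j, H.Adj u v

/-- The Hadwiger number `η(H)`: the largest `t` such that `H` has a `K_t`-minor. -/
noncomputable def hadwigerNumber {W : Type*} (H : SimpleGraph W) : ℕ :=
  sSup {t | HasCliqueMinor H t}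

/-- A graph is `c`-vertex-connected if it has more than `c` vertices and deleting any set of
fewer than `c` vertices leaves a connected graph. -/
def IsKConnected {V : Type*} [Fintype V] (c : ℕ) (G : SimpleGraph V) : Prop :=
  c < Fintype.card V ∧
    ∀ S : Finset V, S.card < c → (G.induce ((S : Set V)ᶜ)).Connected

/-- `G` is planar (Wagner's characterization): `G` has neither a `K₅`-minor nor a
`K₃,₃`-minor. -/
def IsPlanar {V : Type*} (G : SimpleGraph V) : Prop :=
  ¬ HasMinor G (⊤ : SimpleGraph (Fin 5)) ∧
  ¬ HasMinor G (completeBipartiteGraph (Fin 3) (Fin 3))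

/-- `c` is a proper edge coloring of `G`: edges sharing an endpoint get distinct colors. -/
def IsProperEdgeColoring {V : Type*} (G : SimpleGraph V) (c : Sym2 V → ℕ) : Prop :=
  ∀ ⦃u v w⦄, G.Adj u v → G.Adj u w → v ≠ w → c s(u, v) ≠ c s(u, w)

/-- The chromatic index `χ'(G)`: the least `k` such that `G` has a proper edge coloring
using colors `0, …, k-1`. -/
noncomputable def chromaticIndex {V : Type*} (G : SimpleGraph V) : ℕ :=
  sInf {k | ∃ c : Sym2 V → ℕ, IsProperEdgeColoring G c ∧ ∀ e ∈ G.edgeSet, c e < k}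

/-- `G` is `k`-edge-choosable: for every assignment of a list of `k` colors to each edge
there is a proper edge coloring choosing each edge's color from its list. -/
def EdgeChoosable {V : Type*} (G : SimpleGraph V) (k : ℕ) : Prop :=
  ∀ L : Sym2 V → Finset ℕ, (∀ e ∈ G.edgeSet, (L e).card = k) →
    ∃ c : Sym2 V → ℕ, IsProperEdgeColoring G c ∧ ∀ e ∈ G.edgeSet, c e ∈ L e

/-- The edge choosability `ch'(G)`: the least `k` such that `G` is `k`-edge-choosable. -/
noncomputable def edgeChoosability {V : Type*} (G : SimpleGraph V) : ℕ :=
  sInf {k | EdgeChoosable G k}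

/-- The subdivision of `H`: every edge `uv` is replaced by a path `u – w_{uv} – v` through
a new vertex `w_{uv}` corresponding to that edge. -/
def subdivision {V : Type*} (H : SimpleGraph V) : SimpleGraph (V ⊕ H.edgeSet) :=
  SimpleGraph.fromRel fun x y =>
    match x, y with
    | Sum.inl u, Sum.inr e => u ∈ (e : Sym2 V)
    | _, _ => False

/-- The square `G²` of `G`: two distinct vertices are adjacent iff their distance in `G`
is at most `2`, i.e. they are adjacent or have a common neighbour. -/
def squareGraph {V : Type*} (G : SimpleGraph V) : SimpleGraph V :=
  SimpleGraph.fromRel fun u v => G.Adj u v ∨ ∃ w, G.Adj u w ∧ G.Adj w v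

universe u


/-!
A total coloring of `G` is a proper coloring of `T(G)`, so `χ(T(G)) ≤ χ''(G) ≤ Δ + 2` and it
suffices to find a `K_{χ''(G)}` minor in `T(G)`. A vertex `u` of maximum degree together with
its `Δ` edges is a clique of `T(G)`; this settles `χ''(G) ≤ Δ + 1`.

If `χ''(G) = Δ + 2`, induct over subgraphs `H` with `χ''(H) ≥ Δ(H) + 2`; by the Total Coloring
Conjecture, a subgraph `H' ≤ H` with `χ''(H') ≥ Δ(H) + 2` has `Δ(H') = Δ(H)`, so it is again such
a subgraph. Write `Δ = Δ(H)` and let `u` have degree `Δ` in `H`. If all neighbours of `u` lie in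
one component `C` of `H - u`, then `{u}`, the `Δ` edges at `u` and the vertices of `C` are the
branch sets of a `K_{Δ+2}` minor. Otherwise `u` is a cut vertex separating its neighbours, and `H`
is the edge-disjoint union of two proper subgraphs meeting only at `u`. If either of them still
has `χ'' ≥ Δ + 2`, induction applies; otherwise both have total colorings with `Δ + 1` colors
which, after permuting the colors of one of them, agree at `u` and glue to a `(Δ + 1)`-total
coloring of `H`, a contradiction.
-/

variable {V W ι κ : Type*}

section TotalColoring

variable {G : SimpleGraph V} {G' : SimpleGraph W} {cv : V → ℕ} {ce : Sym2 V → ℕ} {k : ℕ}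

def HasTotalColoring (G : SimpleGraph V) (k : ℕ) : Prop :=
  ∃ cv ce, IsTotalColoring G cv ce ∧ (∀ v, cv v < k) ∧ ∀ e ∈ G.edgeSet, ce e < k

theorem IsTotalColoring.edge_ne_vertex (hc : IsTotalColoring G cv ce) {e : Sym2 V}
    (he : e ∈ G.edgeSet) {a : V} (ha : a ∈ e) : ce e ≠ cv a := by
  obtain ⟨b, rfl⟩ := Sym2.mem_iff_exists.mp ha
  exact (hc.2.2 he).1

theorem IsTotalColoring.edge_ne_edge (hc : IsTotalColoring G cv ce) {e f : Sym2 V}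
    (he : e ∈ G.edgeSet) (hf : f ∈ G.edgeSet) (hef : e ≠ f) {a : V} (hae : a ∈ e)
    (haf : a ∈ f) : ce e ≠ ce f := by
  obtain ⟨b, rfl⟩ := Sym2.mem_iff_exists.mp hae
  obtain ⟨c, rfl⟩ := Sym2.mem_iff_exists.mp haf
  exact hc.2.1 he hf fun hbc => hef (hbc ▸ rfl)

theorem IsTotalColoring.comp (hc : IsTotalColoring G cv ce) {π : ℕ → ℕ}
    (hπ : Function.Injective π) : IsTotalColoring G (π ∘ cv) (π ∘ ce) :=
  ⟨fun _ _ h => hπ.ne (hc.1 h), fun _ _ _ h h' hne => hπ.ne (hc.2.1 h h' hne),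
    fun _ _ h => ⟨hπ.ne (hc.2.2 h).1, hπ.ne (hc.2.2 h).2⟩⟩

theorem HasTotalColoring.mono {m : ℕ} (h : HasTotalColoring G k) (hkm : k ≤ m) :
    HasTotalColoring G m := by
  obtain ⟨cv, ce, hc, hv, he⟩ := h
  exact ⟨cv, ce, hc, fun v => (hv v).trans_le hkm, fun e h => (he e h).trans_le hkm⟩

theorem HasTotalColoring.of_copy (f : Copy G G') (h : HasTotalColoring G' k) :
    HasTotalColoring G k := by
  obtain ⟨cv, ce, hc, hv, he⟩ := h
  refine ⟨cv ∘ f, ce ∘ Sym2.map f, ⟨fun _ _ h => hc.1 (f.toHom.map_adj h), ?_, ?_⟩,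
    fun v => hv (f v), ?_⟩
  · intro u v w huv huw hvw
    exact hc.2.1 (f.toHom.map_adj huv) (f.toHom.map_adj huw) (f.injective.ne hvw)
  · exact fun _ _ h => hc.2.2 (f.toHom.map_adj h)
  · rintro ⟨a, b⟩ hab
    exact he _ (f.toHom.map_adj hab)

theorem hasTotalColoring_bot : HasTotalColoring (⊥ : SimpleGraph V) 1 :=
  ⟨0, 0, ⟨fun _ _ h => h.elim, fun _ _ _ h => h.elim, fun _ _ h => h.elim⟩,
    fun _ => Nat.one_pos, fun _ _ => Nat.one_pos⟩

theorem hasTotalColoring_zero [IsEmpty V] : HasTotalColoring G 0 :=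
  ⟨0, 0, ⟨fun u => isEmptyElim u, fun u => isEmptyElim u, fun u => isEmptyElim u⟩,
    fun v => isEmptyElim v, fun e _ => isEmptyElim e.out.1⟩

theorem exists_hasTotalColoring [Finite V] : ∃ k, HasTotalColoring G k := by
  have := Fintype.ofFinite V
  classical
  let c := Fintype.equivFin (V ⊕ Sym2 V)
  have hc : Function.Injective fun x => (c x : ℕ) := Fin.val_injective.comp c.injective
  refine ⟨Fintype.card (V ⊕ Sym2 V), fun v => c (.inl v), fun e => c (.inr e),
    ⟨fun u v h => (hc.comp Sum.inl_injective).ne h.ne,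
      fun u v w _ _ hvw => (hc.comp Sum.inr_injective).ne (Sym2.congr_right.not.mpr hvw),
      fun u v _ => ⟨hc.ne Sum.inr_ne_inl, hc.ne Sum.inr_ne_inl⟩⟩,
    fun v => (c _).2, fun e _ => (c _).2⟩

theorem totalChromaticNumber_le (h : HasTotalColoring G k) : totalChromaticNumber G ≤ k :=
  Nat.sInf_le h

theorem hasTotalColoring_totalChromaticNumber [Finite V] :
    HasTotalColoring G (totalChromaticNumber G) :=
  Nat.sInf_mem exists_hasTotalColoring

theorem totalChromaticNumber_le_iff [Finite V] :
    totalChromaticNumber G ≤ k ↔ HasTotalColoring G k :=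
  ⟨hasTotalColoring_totalChromaticNumber.mono, totalChromaticNumber_le⟩

theorem totalChromaticNumber_eq_zero [IsEmpty V] : totalChromaticNumber G = 0 :=
  Nat.le_zero.mp (totalChromaticNumber_le hasTotalColoring_zero)

theorem totalChromaticNumber_le_of_copy [Finite W] (f : Copy G G') :
    totalChromaticNumber G ≤ totalChromaticNumber G' :=
  totalChromaticNumber_le (hasTotalColoring_totalChromaticNumber.of_copy f)

end TotalColoring

section Gluing

open Finset

theorem exists_perm_apply_eq_of_card_add_card_le {N a b : ℕ} {s F : Finset ℕ} (ha : a < N)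
    (hs : ∀ x ∈ s, x < N) (has : a ∉ s) (hb : b < N) (hbF : b ∈ F) (hcard : #s + #F ≤ N) :
    ∃ π : Equiv.Perm ℕ, (∀ x < N, π x < N) ∧ π a = b ∧ ∀ x ∈ s, π x ∉ F := by
  induction s using Finset.induction_on with
  | empty =>
    refine ⟨Equiv.swap a b, fun x hx => ?_, Equiv.swap_apply_left a b, by simp⟩
    rw [Equiv.swap_apply_def]
    split_ifs <;> assumption
  | insert x s hxs ih =>
    simp only [mem_insert, forall_eq_or_imp, not_or] at hs has ⊢
    rw [card_insert_of_notMem hxs] at hcard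
    obtain ⟨π, hπN, hπa, hπs⟩ := ih hs.2 has.2 (by omega)
    obtain ⟨c, hcN, hcF⟩ : ∃ c ∈ range N, c ∉ F ∪ s.image π := by
      refine exists_mem_notMem_of_card_lt_card ?_
      calc #(F ∪ s.image π) ≤ #F + #s := (card_union_le _ _).trans (by grw [card_image_le])
        _ < #(range N) := by rw [card_range]; omega
    simp only [mem_range, mem_union, mem_image, not_or, not_exists, not_and] at hcN hcF
    have hπx : ∀ y, y ≠ x → π y ≠ π x := fun y hy => π.injective.ne hy
    refine ⟨π.trans (Equiv.swap (π x) c), fun y hy => ?_, ?_, ?_, fun y hy => ?_⟩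
    · rw [Equiv.trans_apply, Equiv.swap_apply_def]
      split_ifs <;> grind
    · rw [Equiv.trans_apply, hπa, Equiv.swap_apply_of_ne_of_ne (hπa ▸ hπx a has.1)
        (fun h : b = c => hcF.1 (h ▸ hbF))]
    · simpa using hcF.1
    · rw [Equiv.trans_apply, Equiv.swap_apply_of_ne_of_ne (hπx y (by grind))
        (hcF.2 y hy ·)]
      exact hπs y hy

variable {H₁ H₂ : SimpleGraph V} {A : Set V} {u : V} {N : ℕ}

theorem IsTotalColoring.hasTotalColoring_sup {cv₁ cv₂ : V → ℕ} {ce₁ ce₂ : Sym2 V → ℕ}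
    (h₁A : ∀ ⦃a b⦄, H₁.Adj a b → a ∈ A) (h₂A : ∀ ⦃a b⦄, H₂.Adj a b → a ∈ A → a = u)
    (hc₁ : IsTotalColoring H₁ cv₁ ce₁) (hc₂ : IsTotalColoring H₂ cv₂ ce₂)
    (hv₁ : ∀ v, cv₁ v < N) (he₁ : ∀ e ∈ H₁.edgeSet, ce₁ e < N)
    (hv₂ : ∀ v, cv₂ v < N) (he₂ : ∀ e ∈ H₂.edgeSet, ce₂ e < N) (hu : cv₂ u = cv₁ u)
    (hE : ∀ ⦃w w'⦄, H₂.Adj u w → H₁.Adj u w' → ce₂ s(u, w) ≠ ce₁ s(u, w')) :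
    HasTotalColoring (H₁ ⊔ H₂) N := by
  classical
  set cv := fun v => if v ∈ A then cv₁ v else cv₂ v
  set ce := fun e => if e ∈ H₁.edgeSet then ce₁ e else ce₂ e
  have hcv₁ : ∀ ⦃a b⦄, H₁.Adj a b → cv a = cv₁ a := fun a b h => if_pos (h₁A h)
  have hcv₂ : ∀ ⦃a b⦄, H₂.Adj a b → cv a = cv₂ a := by
    intro a b h
    by_cases ha : a ∈ A
    · rw [show cv a = cv₁ a from if_pos ha, h₂A h ha, hu]
    · exact if_neg ha
  have hce₁ : ∀ ⦃a b⦄, H₁.Adj a b → ce s(a, b) = ce₁ s(a, b) := fun a b h => if_pos h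
  have hce₂ : ∀ ⦃a b⦄, H₂.Adj a b → ce s(a, b) = ce₂ s(a, b) := by
    refine fun a b h => if_neg fun h₁ => h.ne ?_
    rw [h₂A h (h₁A h₁), h₂A h.symm (h₁A h₁.symm)]
  refine ⟨cv, ce, ⟨?_, ?_, ?_⟩, fun v => ?_, fun e he => ?_⟩
  · rintro a b (h | h)
    · rw [hcv₁ h, hcv₁ h.symm]; exact hc₁.1 h
    · rw [hcv₂ h, hcv₂ h.symm]; exact hc₂.1 h
  · rintro a b c (hb | hb) (hc | hc) hbc
    · rw [hce₁ hb, hce₁ hc]; exact hc₁.2.1 hb hc hbc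
    · obtain rfl := h₂A hc (h₁A hb)
      rw [hce₁ hb, hce₂ hc]; exact (hE hc hb).symm
    · obtain rfl := h₂A hb (h₁A hc)
      rw [hce₂ hb, hce₁ hc]; exact hE hb hc
    · rw [hce₂ hb, hce₂ hc]; exact hc₂.2.1 hb hc hbc
  · rintro a b (h | h)
    · rw [hce₁ h, hcv₁ h, hcv₁ h.symm]; exact hc₁.2.2 h
    · rw [hce₂ h, hcv₂ h, hcv₂ h.symm]; exact hc₂.2.2 h
  · dsimp only [cv]; split_ifs
    exacts [hv₁ v, hv₂ v]
  · rw [edgeSet_sup] at he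
    dsimp only [ce]; split_ifs with h
    exacts [he₁ e h, he₂ e (he.resolve_left h)]

theorem HasTotalColoring.sup [Fintype V] [DecidableRel H₁.Adj] [DecidableRel H₂.Adj]
    (h₁A : ∀ ⦃a b⦄, H₁.Adj a b → a ∈ A) (h₂A : ∀ ⦃a b⦄, H₂.Adj a b → a ∈ A → a = u)
    (hdeg : H₁.degree u + H₂.degree u < N) (h₁ : HasTotalColoring H₁ N)
    (h₂ : HasTotalColoring H₂ N) : HasTotalColoring (H₁ ⊔ H₂) N := by
  obtain ⟨cv₁, ce₁, hc₁, hv₁, he₁⟩ := h₁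
  obtain ⟨cv₂, ce₂, hc₂, hv₂, he₂⟩ := h₂
  -- Rename the colors of `H₂` so that `u` keeps its `H₁`-color and the `H₂`-edges at `u` avoid
  -- every color seen at `u` in `H₁`; there is room because `u` has fewer than `N` edges.
  set E₁ := (H₁.neighborFinset u).image fun w => ce₁ s(u, w)
  set E₂ := (H₂.neighborFinset u).image fun w => ce₂ s(u, w)
  obtain ⟨π, hπN, hπu, hπE⟩ := exists_perm_apply_eq_of_card_add_card_le (s := E₂)
    (F := insert (cv₁ u) E₁) (hv₂ u) (by simpa [E₂] using fun w (h : H₂.Adj u w) => he₂ _ h)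
    (by simpa [E₂] using fun w (h : H₂.Adj u w) => (hc₂.2.2 h).1) (hv₁ u) (mem_insert_self _ _)
    (by
      grw [card_insert_le, card_image_le, card_image_le]
      simp only [card_neighborFinset_eq_degree]
      omega)
  refine hc₁.hasTotalColoring_sup h₁A h₂A (hc₂.comp π.injective) hv₁ he₁
    (fun v => hπN _ (hv₂ v)) (fun e he => hπN _ (he₂ e he)) hπu fun w w' hw hw' h => ?_
  refine hπE _ (mem_image_of_mem _ ((mem_neighborFinset _ _ _).mpr hw)) (mem_insert_of_mem ?_)
  rw [show π (ce₂ s(u, w)) = ce₁ s(u, w') from h]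
  exact mem_image_of_mem _ ((mem_neighborFinset _ _ _).mpr hw')

end Gluing

section CliqueMinor

variable {H : SimpleGraph V} {H' : SimpleGraph W} {B : ι → Set V} {s t : ℕ}

def IsCliqueMinorModel (H : SimpleGraph V) (B : ι → Set V) : Prop :=
  (∀ i, (B i).Nonempty) ∧ (Pairwise fun i j => Disjoint (B i) (B j)) ∧
    (∀ i, (H.induce (B i)).Connected) ∧ Pairwise fun i j => ∃ u ∈ B i, ∃ v ∈ B j, H.Adj u v

theorem IsCliqueMinorModel.comp (h : IsCliqueMinorModel H B) {f : κ → ι}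
    (hf : Function.Injective f) : IsCliqueMinorModel H (B ∘ f) :=
  ⟨fun i => h.1 (f i), fun _ _ hij => h.2.1 (hf.ne hij), fun i => h.2.2.1 (f i),
    fun _ _ hij => h.2.2.2 (hf.ne hij)⟩

theorem IsCliqueMinorModel.hasCliqueMinor [Fintype ι] (h : IsCliqueMinorModel H B) :
    HasCliqueMinor H (Fintype.card ι) :=
  ⟨_, h.comp (Fintype.equivFin ι).symm.injective⟩

theorem HasCliqueMinor.mono (h : HasCliqueMinor H t) (hst : s ≤ t) : HasCliqueMinor H s :=
  let ⟨_, hB⟩ := h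
  ⟨_, (show IsCliqueMinorModel H _ from hB).comp (Fin.castLE_injective hst)⟩

theorem hasCliqueMinor_zero : HasCliqueMinor H 0 :=
  ⟨Fin.elim0, fun i => i.elim0, fun i => i.elim0, fun i => i.elim0, fun i => i.elim0⟩

theorem HasCliqueMinor.le_card [Finite V] (h : HasCliqueMinor H t) : t ≤ Nat.card V := by
  obtain ⟨B, hne, hdisj, -, -⟩ := h
  choose f hf using hne
  have hf_inj : Function.Injective f := fun i j hij => by
    by_contra hne
    exact Set.disjoint_left.mp (hdisj hne) (hf i) (hij ▸ hf j)
  simpa using Nat.card_le_card_of_injective f hf_inj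

theorem le_hadwigerNumber [Finite V] (h : HasCliqueMinor H t) : t ≤ hadwigerNumber H :=
  le_csSup ⟨Nat.card V, fun _ => HasCliqueMinor.le_card⟩ h

theorem connected_induce_image (f : H →g H') {S : Set V} (h : (H.induce S).Connected) :
    (H'.induce (f '' S)).Connected :=
  h.map (⟨fun x => ⟨f x, Set.mem_image_of_mem f x.2⟩, fun h => f.map_adj h⟩ :
      H.induce S →g H'.induce (f '' S)) (by rintro ⟨_, x, hx, rfl⟩; exact ⟨⟨x, hx⟩, rfl⟩)

theorem IsCliqueMinorModel.image (h : IsCliqueMinorModel H B) (f : Copy H H') :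
    IsCliqueMinorModel H' fun i => f '' B i := by
  refine ⟨fun i => (h.1 i).image f, fun i j hij => ?_, fun i => ?_, fun i j hij => ?_⟩
  · exact (Set.disjoint_image_iff f.injective).mpr (h.2.1 hij)
  · exact connected_induce_image f.toHom (h.2.2.1 i)
  · obtain ⟨u, hu, v, hv, huv⟩ := h.2.2.2 hij
    exact ⟨f u, Set.mem_image_of_mem f hu, f v, Set.mem_image_of_mem f hv, f.toHom.map_adj huv⟩

theorem HasCliqueMinor.map (h : HasCliqueMinor H t) (f : Copy H H') : HasCliqueMinor H' t :=
  let ⟨_, hB⟩ := h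
  ⟨_, (show IsCliqueMinorModel H _ from hB).image f⟩

theorem isCliqueMinorModel_singleton {f : ι → V} (hf : Pairwise fun i j => H.Adj (f i) (f j)) :
    IsCliqueMinorModel H fun i => {f i} := by
  refine ⟨fun i => Set.singleton_nonempty _, fun i j hij => ?_, fun i => ?_,
    fun i j hij => ⟨f i, rfl, f j, rfl, hf hij⟩⟩
  · exact Set.disjoint_singleton.mpr (hf hij).ne
  · rw [induce_singleton_eq_top]
    exact connected_top

theorem IsCliqueMinorModel.optionElim (h : IsCliqueMinorModel H B) {X : Set V}
    (hX : X.Nonempty) (hXc : (H.induce X).Connected) (hXB : ∀ i, Disjoint X (B i))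
    (hXadj : ∀ i, ∃ u ∈ X, ∃ v ∈ B i, H.Adj u v) :
    IsCliqueMinorModel H fun o : Option ι => o.elim X B := by
  refine ⟨?_, ?_, ?_, ?_⟩
  · rintro (_ | i)
    exacts [hX, h.1 i]
  · rintro (_ | i) (_ | j) hij
    exacts [absurd rfl hij, hXB j, (hXB i).symm, h.2.1 (Option.some_injective _ |>.ne_iff.mp hij)]
  · rintro (_ | i)
    exacts [hXc, h.2.2.1 i]
  · rintro (_ | i) (_ | j) hij
    · exact absurd rfl hij
    · exact hXadj j
    · obtain ⟨u, hu, v, hv, huv⟩ := hXadj i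
      exact ⟨v, hv, u, hu, huv.symm⟩
    · exact h.2.2.2 (Option.some_injective _ |>.ne_iff.mp hij)

end CliqueMinor

section TotalGraph

variable {G H : SimpleGraph V} {u : V} {k : ℕ}

@[simp]
theorem totalGraph_adj_inl_inl {a b : V} :
    (totalGraph G).Adj (.inl a) (.inl b) ↔ G.Adj a b := by
  simp only [totalGraph, fromRel_adj, ne_eq, Sum.inl.injEq]
  exact ⟨fun h => h.2.elim id fun h => h.symm, fun h => ⟨h.ne, .inl h⟩⟩

@[simp]
theorem totalGraph_adj_inl_inr {a : V} {e : G.edgeSet} :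
    (totalGraph G).Adj (.inl a) (.inr e) ↔ a ∈ (e : Sym2 V) := by
  simp [totalGraph]

@[simp]
theorem totalGraph_adj_inr_inl {a : V} {e : G.edgeSet} :
    (totalGraph G).Adj (.inr e) (.inl a) ↔ a ∈ (e : Sym2 V) := by
  simp [totalGraph]

@[simp]
theorem totalGraph_adj_inr_inr {e f : G.edgeSet} :
    (totalGraph G).Adj (.inr e) (.inr f) ↔ e ≠ f ∧ ∃ a ∈ (e : Sym2 V), a ∈ (f : Sym2 V) := by
  simp only [totalGraph, fromRel_adj, ne_eq, Sum.inr.injEq]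
  exact and_congr_right fun _ => or_iff_left_of_imp fun ⟨a, hf, he⟩ => ⟨a, he, hf⟩

def totalGraph.inlHom (G : SimpleGraph V) : G →g totalGraph G :=
  ⟨Sum.inl, totalGraph_adj_inl_inl.mpr⟩

def totalGraph.copyOfLE (h : H ≤ G) : Copy (totalGraph H) (totalGraph G) where
  toHom.toFun := Sum.map id (Set.inclusion (edgeSet_mono h))
  toHom.map_rel' := by
    rintro (a | e) (b | f) hab
    · exact totalGraph_adj_inl_inl.mpr (h (totalGraph_adj_inl_inl.mp hab))
    · exact totalGraph_adj_inl_inr.mpr (totalGraph_adj_inl_inr (G := H).mp hab)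
    · exact totalGraph_adj_inr_inl.mpr (totalGraph_adj_inr_inl (G := H).mp hab)
    · obtain ⟨hef, hcommon⟩ := totalGraph_adj_inr_inr.mp hab
      exact totalGraph_adj_inr_inr.mpr ⟨(Set.inclusion_injective _).ne hef, hcommon⟩
  injective' := Sum.map_injective.mpr ⟨Function.injective_id, Set.inclusion_injective _⟩

theorem HasTotalColoring.colorable_totalGraph (h : HasTotalColoring G k) :
    (totalGraph G).Colorable k := by
  obtain ⟨cv, ce, hc, hv, he⟩ := h
  refine (colorable_iff_exists_bdd_nat_coloring k).mpr
    ⟨Coloring.mk (Sum.elim cv fun e => ce e) ?_, ?_⟩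
  · rintro (a | ⟨e, he⟩) (b | ⟨f, hf⟩) hab
    · exact hc.1 (totalGraph_adj_inl_inl.mp hab)
    · exact (hc.edge_ne_vertex hf (totalGraph_adj_inl_inr.mp hab)).symm
    · exact hc.edge_ne_vertex he (totalGraph_adj_inr_inl.mp hab)
    · obtain ⟨hef, a, hae, haf⟩ := totalGraph_adj_inr_inr.mp hab
      exact hc.edge_ne_edge he hf (Subtype.coe_injective.ne hef) hae haf
  · rintro (v | e)
    exacts [hv v, he e e.2]

theorem chromaticNumber_totalGraph_le [Finite V] :
    (totalGraph G).chromaticNumber ≤ totalChromaticNumber G :=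
  hasTotalColoring_totalChromaticNumber.colorable_totalGraph.chromaticNumber_le

def totalGraph.star (G : SimpleGraph V) (u : V) : Option (G.neighborSet u) → V ⊕ G.edgeSet
  | none => .inl u
  | some w => .inr ⟨s(u, w), w.2⟩

theorem totalGraph.pairwise_adj_star :
    Pairwise fun i j => (totalGraph G).Adj (star G u i) (star G u j) := by
  rintro (_ | v) (_ | w) hvw
  · exact absurd rfl hvw
  · simp [star]
  · simp [star]
  · refine totalGraph_adj_inr_inr.mpr
      ⟨fun h => hvw ?_, u, Sym2.mem_mk_left _ _, Sym2.mem_mk_left _ _⟩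
    exact congrArg some (Subtype.ext (Sym2.congr_right.mp (congrArg Subtype.val h)))

theorem hasCliqueMinor_totalGraph_degree_add_one [Fintype (G.neighborSet u)] :
    HasCliqueMinor (totalGraph G) (G.degree u + 1) := by
  have h := (isCliqueMinorModel_singleton (totalGraph.pairwise_adj_star (G := G) (u := u)))
    |>.hasCliqueMinor
  rwa [Fintype.card_option, card_neighborSet_eq_degree] at h

theorem hasCliqueMinor_totalGraph_degree_add_two [Fintype (G.neighborSet u)] {w₀ : V}
    (hw₀ : G.Adj u w₀) (hreach : ∀ w, G.Adj u w → (G.deleteIncidenceSet u).Reachable w₀ w) :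
    HasCliqueMinor (totalGraph G) (G.degree u + 2) := by
  set C := (G.deleteIncidenceSet u).connectedComponentMk w₀
  have hC : ∀ {v}, G.Adj u v → v ∈ C.supp := fun hv =>
    (C.mem_supp_iff _).mpr (ConnectedComponent.eq.mpr (hreach _ hv).symm)
  have huC : u ∉ C.supp := fun hu => by
    obtain ⟨p⟩ := ConnectedComponent.eq.mp ((C.mem_supp_iff u).mp hu)
    cases p with
    | nil => exact hw₀.ne rfl
    | cons h _ => exact (deleteIncidenceSet_adj.mp h).2.1 rfl
  let f := (totalGraph.inlHom G).comp (Hom.ofLE (deleteIncidenceSet_le G u))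
  have h := (isCliqueMinorModel_singleton (totalGraph.pairwise_adj_star (G := G) (u := u))
    |>.optionElim (X := f '' C.supp) ⟨_, Set.mem_image_of_mem f (hC hw₀)⟩
      (connected_induce_image f C.maximal_connected_induce_supp.prop) ?_ ?_).hasCliqueMinor
  · rwa [Fintype.card_option, Fintype.card_option, card_neighborSet_eq_degree] at h
  · rintro (_ | w) <;> refine Set.disjoint_singleton_right.mpr ?_
    · rintro ⟨v, hv, hvu⟩
      obtain rfl : v = u := Sum.inl_injective hvu
      exact huC hv
    · rintro ⟨v, -, hv⟩
      exact Sum.inl_ne_inr hv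
  · rintro (_ | w)
    · exact ⟨f w₀, Set.mem_image_of_mem f (hC hw₀), _, rfl, totalGraph_adj_inl_inl.mpr hw₀.symm⟩
    · exact ⟨f w, Set.mem_image_of_mem f (hC w.2), _, rfl,
        totalGraph_adj_inl_inr.mpr (Sym2.mem_mk_right _ _)⟩

end TotalGraph

section CutVertex

variable {G H H₁ : SimpleGraph V} {u : V}

theorem spanningCoe_induce_adj {A : Set V} {a b : V} :
    (G.induce A).spanningCoe.Adj a b ↔ G.Adj a b ∧ a ∈ A ∧ b ∈ A := by
  simp [← and_assoc]

theorem degree_add_degree_sdiff [Fintype V] [DecidableRel H.Adj] [DecidableRel H₁.Adj]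
    [DecidableRel (H \ H₁).Adj] (h : H₁ ≤ H) (v : V) :
    H₁.degree v + (H \ H₁).degree v = H.degree v := by
  classical
  have hsub : H₁.neighborFinset v ⊆ H.neighborFinset v := fun w => by simpa using (h ·)
  have hsdiff : (H \ H₁).neighborFinset v = H.neighborFinset v \ H₁.neighborFinset v := by
    ext; simp
  rw [← card_neighborFinset_eq_degree, ← card_neighborFinset_eq_degree,
    ← card_neighborFinset_eq_degree, hsdiff, add_comm, Finset.card_sdiff_add_card_eq_card hsub]

theorem exists_lt_lt_hasTotalColoring_of_not_reachable [Fintype V] [DecidableRel H.Adj]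
    {w₀ w₁ : V} (hw₀ : H.Adj u w₀) (hw₁ : H.Adj u w₁)
    (hnr : ¬(H.deleteIncidenceSet u).Reachable w₀ w₁) :
    ∃ H₁ < H, ∃ H₂ < H, ∀ N, H.degree u < N → HasTotalColoring H₁ N →
      HasTotalColoring H₂ N → HasTotalColoring H N := by
  classical
  set A := insert u {v | (H.deleteIncidenceSet u).Reachable w₀ v}
  set H₁ := (H.induce A).spanningCoe
  have hle : H₁ ≤ H := spanningCoe_induce_le H A
  have hw₀A : w₀ ∈ A := Or.inr (Reachable.refl w₀)
  have hw₁A : w₁ ∉ A := by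
    rintro (h | h)
    exacts [hw₁.ne h.symm, hnr h]
  have hcut : ∀ ⦃a b⦄, (H \ H₁).Adj a b → a ∈ A → a = u := by
    intro a b hab ha
    rw [sdiff_adj, spanningCoe_induce_adj] at hab
    by_contra hau
    refine hab.2 ⟨hab.1, ha, ?_⟩
    by_cases hbu : b = u
    · exact Or.inl hbu
    · exact Or.inr ((ha.resolve_left hau).trans
        (deleteIncidenceSet_adj.mpr ⟨hab.1, hau, hbu⟩).reachable)
  refine ⟨H₁, hle.lt_of_ne fun h => ?_, H \ H₁, sdiff_le.lt_of_ne fun h => ?_,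
    fun N hN h₁ h₂ => ?_⟩
  · exact hw₁A (spanningCoe_induce_adj.mp (by rw [h]; exact hw₁ : H₁.Adj u w₁)).2.2
  · refine ((sdiff_adj _ _ _ _).mp (by rw [h]; exact hw₀ : (H \ H₁).Adj u w₀)).2 ?_
    exact spanningCoe_induce_adj.mpr ⟨hw₀, Set.mem_insert u _, hw₀A⟩
  · rw [← sup_sdiff_cancel_right hle]
    refine h₁.sup (fun a b h => (spanningCoe_induce_adj.mp h).2.1) hcut ?_ h₂
    rwa [degree_add_degree_sdiff hle]

end CutVertex

section Main

variable [Fintype V]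

theorem exists_adj_degree_eq_maxDegree_of_ne_bot {H : SimpleGraph V} [DecidableRel H.Adj]
    (hH : H ≠ ⊥) :
    ∃ u w, H.degree u = H.maxDegree ∧ H.Adj u w := by
  obtain ⟨x, y, hxy⟩ := ne_bot_iff_exists_adj.mp hH
  have : Nonempty V := ⟨x⟩
  obtain ⟨u, hu⟩ := H.exists_maximal_degree_vertex
  have hx : 0 < H.degree x := (H.degree_pos_iff_exists_adj x).mpr ⟨y, hxy⟩
  obtain ⟨w, hw⟩ := (H.degree_pos_iff_exists_adj u).mp (hu ▸ hx.trans_le (H.degree_le_maxDegree x))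
  exact ⟨u, w, hu.symm, hw⟩

theorem hasCliqueMinor_totalGraph_maxDegree_add_two (H : SimpleGraph V) [hH : DecidableRel H.Adj]
    (hTCC : ∀ H' ≤ H, ∀ [DecidableRel H'.Adj], totalChromaticNumber H' ≤ H'.maxDegree + 2)
    (hχ : H.maxDegree + 2 ≤ totalChromaticNumber H) :
    HasCliqueMinor (totalGraph H) (H.maxDegree + 2) := by
  classical
  revert hH
  induction H using WellFoundedLT.induction with | _ H IH => ?_
  intro _ hχ
  obtain ⟨u, w₀, hu, hw₀⟩ := exists_adj_degree_eq_maxDegree_of_ne_bot fun h : H = ⊥ => by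
    have := totalChromaticNumber_le (h ▸ hasTotalColoring_bot (V := V))
    omega
  by_cases hconn : ∀ w, H.Adj u w → (H.deleteIncidenceSet u).Reachable w₀ w
  · exact hu ▸ hasCliqueMinor_totalGraph_degree_add_two hw₀ hconn
  push Not at hconn
  obtain ⟨w₁, hw₁, hnr⟩ := hconn
  obtain ⟨H₁, hH₁, H₂, hH₂, hglue⟩ := exists_lt_lt_hasTotalColoring_of_not_reachable hw₀ hw₁ hnr
  have hrec : ∀ H' < H, H.maxDegree + 2 ≤ totalChromaticNumber H' →
      HasCliqueMinor (totalGraph H) (H.maxDegree + 2) := by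
    intro H' hH' hχ'
    have hΔ : H'.maxDegree = H.maxDegree :=
      (maxDegree_mono hH'.le).antisymm (by have := hTCC H' hH'.le; omega)
    rw [← hΔ] at hχ' ⊢
    exact (IH H' hH' (fun K hK => hTCC K (hK.trans hH'.le)) hχ').map (totalGraph.copyOfLE hH'.le)
  by_cases h₁ : H.maxDegree + 2 ≤ totalChromaticNumber H₁
  · exact hrec H₁ hH₁ h₁
  by_cases h₂ : H.maxDegree + 2 ≤ totalChromaticNumber H₂
  · exact hrec H₂ hH₂ h₂
  have := totalChromaticNumber_le <| hglue (H.maxDegree + 1) (by omega)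
    (totalChromaticNumber_le_iff.mp (by omega)) (totalChromaticNumber_le_iff.mp (by omega))
  omega

theorem hasCliqueMinor_totalGraph_totalChromaticNumber (G : SimpleGraph V) [DecidableRel G.Adj]
    (hTCC : ∀ H ≤ G, ∀ [DecidableRel H.Adj], totalChromaticNumber H ≤ H.maxDegree + 2) :
    HasCliqueMinor (totalGraph G) (totalChromaticNumber G) := by
  rcases (hTCC G le_rfl).lt_or_eq with hlt | heq
  · cases isEmpty_or_nonempty V
    · rw [totalChromaticNumber_eq_zero]
      exact hasCliqueMinor_zero
    · obtain ⟨u, hu⟩ := G.exists_maximal_degree_vertex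
      exact (hasCliqueMinor_totalGraph_degree_add_one (u := u)).mono (by omega)
  · rw [heq]
    exact hasCliqueMinor_totalGraph_maxDegree_add_two G hTCC heq.ge

end Main

/-- if `F` is a class of simple finite graphs closed under taking subgraphs on
which the Total Coloring Conjecture holds (`χ''(G) ≤ Δ(G) + 2`), then Hadwiger's conjecture
holds for the total graph of every member of `F`, i.e. `χ(T(G)) ≤ η(T(G))`. -/
theorem hadwiger_totalGraph_of_TCC (F : ∀ {V : Type u}, SimpleGraph V → Prop)
    (hclosed : ∀ {V : Type u} [Fintype V] (G : SimpleGraph V),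
      F G → ∀ G' : G.Subgraph, F G'.coe)
    (hTCC : ∀ {V : Type u} [Fintype V] (G : SimpleGraph V) [DecidableRel G.Adj],
      F G → totalChromaticNumber G ≤ G.maxDegree + 2)
    {V : Type u} [Fintype V] (G : SimpleGraph V) (hG : F G) :
    (totalGraph G).chromaticNumber ≤ (hadwigerNumber (totalGraph G) : ℕ∞) := by
  classical
  have hTCC_le : ∀ H ≤ G, ∀ [DecidableRel H.Adj],
      totalChromaticNumber H ≤ H.maxDegree + 2 := by
    intro H hH _
    let S := G.toSubgraph H hH
    let e : H ≃g S.coe := S.spanningCoeEquivCoeOfSpanning (toSubgraph.isSpanning H hH)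
    calc totalChromaticNumber H ≤ totalChromaticNumber S.coe :=
          totalChromaticNumber_le_of_copy e.toCopy
      _ ≤ S.coe.maxDegree + 2 := hTCC _ (hclosed G hG S)
      _ ≤ H.maxDegree + 2 := by grw [e.symm.toCopy.maxDegree_mono]
  calc (totalGraph G).chromaticNumber ≤ totalChromaticNumber G := chromaticNumber_totalGraph_le
    _ ≤ hadwigerNumber (totalGraph G) := by
      exact_mod_cast le_hadwigerNumber (hasCliqueMinor_totalGraph_totalChromaticNumber G hTCC_le)
end

section
/- Let G be a connected simple graph on at least 3 vertices that is (Δ(G)+k)-total-critical for some integer k with 2 < k ≤ Δ(G). Then the minimum degree of G is at least k. -/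
open SimpleGraph

/-!
Suppose a vertex `v` had degree less than `k`, and let `u` be a neighbour of `v`. By criticality
`G - uv` has a total coloring with `Δ + k - 1` colors. Give `uv` a color avoiding the color of `u`
and the at most `(Δ - 1) + (k - 2)` other edges at `u` and `v`, ignoring the color of `v`; then
recolor `v`, whose at most `k - 1` neighbours and `k - 1` incident edges block at most
`2k - 2 < Δ + k - 1` colors since `k ≤ Δ`. This is a total coloring of `G` with `Δ + k - 1`
colors, contradicting `χ''(G) = Δ + k`.
-/

namespace SimpleGraph

variable {V : Type*} {G : SimpleGraph V}

theorem exists_totalColoring [Finite V] (G : SimpleGraph V) :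
    ∃ n cv ce, IsTotalColoring G cv ce ∧ (∀ v, cv v < n) ∧ ∀ e ∈ G.edgeSet, ce e < n := by
  obtain ⟨m, ⟨f⟩⟩ := Finite.exists_equiv_fin V
  obtain ⟨p, ⟨g⟩⟩ := Finite.exists_equiv_fin (Sym2 V)
  refine ⟨m + p, fun v => f v, fun e => m + g e, ⟨?_, ?_, ?_⟩, ?_, ?_⟩
  · exact fun u v huv h => huv.ne (f.injective (Fin.ext h))
  · exact fun u v w _ _ hvw h =>
      hvw (Sym2.congr_right.mp (g.injective (Fin.ext (Nat.add_left_cancel h))))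
  · intro u v _
    have := (f u).is_lt
    have := (f v).is_lt
    dsimp only
    constructor <;> omega
  · exact fun v => by have := (f v).is_lt; dsimp only; omega
  · exact fun e _ => by have := (g e).is_lt; dsimp only; omega

theorem totalChromaticNumber_le {n : ℕ} {cv : V → ℕ} {ce : Sym2 V → ℕ}
    (h : IsTotalColoring G cv ce) (hcv : ∀ v, cv v < n) (hce : ∀ e ∈ G.edgeSet, ce e < n) :
    totalChromaticNumber G ≤ n :=
  Nat.sInf_le ⟨cv, ce, h, hcv, hce⟩

theorem exists_totalColoring_of_totalChromaticNumber_le [Finite V] {n : ℕ}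
    (h : totalChromaticNumber G ≤ n) :
    ∃ cv ce, IsTotalColoring G cv ce ∧ (∀ v, cv v < n) ∧ ∀ e ∈ G.edgeSet, ce e < n := by
  obtain ⟨cv, ce, hc, hcv, hce⟩ := Nat.sInf_mem (exists_totalColoring G)
  exact ⟨cv, ce, hc, fun v => (hcv v).trans_le h, fun e he => (hce e he).trans_le h⟩

theorem exists_lt_notMem_of_card_lt {s : Finset ℕ} {n : ℕ} (h : s.card < n) :
    ∃ a < n, a ∉ s := by
  obtain ⟨a, ha, has⟩ := Finset.exists_mem_notMem_of_card_lt_card (s := s) (t := Finset.range n)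
    (by rwa [Finset.card_range])
  exact ⟨a, Finset.mem_range.mp ha, has⟩

theorem exists_update_isTotalColoring [DecidableEq V] {v : V} [Fintype (G.neighborSet v)] {n : ℕ}
    {cv : V → ℕ} {ce : Sym2 V → ℕ} (hn : 2 * G.degree v < n)
    (hcv : ∀ ⦃x y⦄, G.Adj x y → x ≠ v → y ≠ v → cv x ≠ cv y)
    (hce : IsProperEdgeColoring G ce)
    (hinc : ∀ ⦃x y⦄, G.Adj x y → x ≠ v → ce s(x, y) ≠ cv x) :
    ∃ b < n, IsTotalColoring G (Function.update cv v b) ce := by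
  set F := (G.neighborFinset v).image cv ∪ (G.neighborFinset v).image fun w => ce s(v, w)
    with hFdef
  have hF : F.card < n := by
    rw [hFdef]
    have := Finset.card_union_le ((G.neighborFinset v).image cv)
      ((G.neighborFinset v).image fun w => ce s(v, w))
    have := (G.neighborFinset v).card_image_le (f := cv)
    have := (G.neighborFinset v).card_image_le (f := fun w => ce s(v, w))
    rw [card_neighborFinset_eq_degree] at *
    omega
  obtain ⟨b, hbn, hbF⟩ := exists_lt_notMem_of_card_lt hF
  have hb_vertex : ∀ ⦃y⦄, G.Adj v y → b ≠ cv y := fun y hy h =>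
    hbF (Finset.mem_union_left _ (Finset.mem_image.mpr ⟨y, by simpa using hy, h.symm⟩))
  have hb_edge : ∀ ⦃y⦄, G.Adj v y → ce s(v, y) ≠ b := fun y hy h =>
    hbF (Finset.mem_union_right _ (Finset.mem_image.mpr ⟨y, by simpa using hy, h⟩))
  have hinc' : ∀ ⦃x y⦄, G.Adj x y → ce s(x, y) ≠ Function.update cv v b x := by
    intro x y hxy
    rcases eq_or_ne x v with rfl | hx
    · simpa using hb_edge hxy
    · simpa [hx] using hinc hxy hx
  refine ⟨b, hbn, ?_, hce, fun x y hxy => ⟨hinc' hxy, Sym2.eq_swap ▸ hinc' hxy.symm⟩⟩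
  intro x y hxy
  rcases eq_or_ne x v with rfl | hx
  · simpa [hxy.ne.symm] using hb_vertex hxy
  rcases eq_or_ne y v with rfl | hy
  · simpa [hx] using (hb_vertex hxy.symm).symm
  simpa [hx, hy] using hcv hxy hx hy

theorem adj_deleteEdges_singleton_of_ne {u v x y : V} (hxy : G.Adj x y) (h : s(x, y) ≠ s(u, v)) :
    (G.deleteEdges {s(u, v)}).Adj x y :=
  (deleteEdges_adj ..).mpr ⟨hxy, h⟩

/- The color of `v` is ignored here because `v` is recolored afterwards; this saves the one
color that makes `deg u + deg v ≤ n` (rather than `<`) enough. -/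
theorem exists_update_isProperEdgeColoring [DecidableEq V] {u v : V}
    [Fintype (G.neighborSet u)] [Fintype (G.neighborSet v)] {n : ℕ} {cv : V → ℕ} {ce : Sym2 V → ℕ}
    (huv : G.Adj u v) (hn : G.degree u + G.degree v ≤ n)
    (h : IsTotalColoring (G.deleteEdges {s(u, v)}) cv ce) :
    ∃ a < n, IsProperEdgeColoring G (Function.update ce s(u, v) a) ∧
      ∀ ⦃x y⦄, G.Adj x y → x ≠ v → Function.update ce s(u, v) a s(x, y) ≠ cv x := by
  set F := insert (cv u) (((G.neighborFinset u).erase v).image (fun w => ce s(u, w)) ∪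
    ((G.neighborFinset v).erase u).image fun w => ce s(v, w)) with hFdef
  have hF : F.card < n := by
    rw [hFdef]
    have := Finset.card_insert_le (cv u) (((G.neighborFinset u).erase v).image
      (fun w => ce s(u, w)) ∪ ((G.neighborFinset v).erase u).image fun w => ce s(v, w))
    have := Finset.card_union_le (((G.neighborFinset u).erase v).image fun w => ce s(u, w))
      (((G.neighborFinset v).erase u).image fun w => ce s(v, w))
    have := ((G.neighborFinset u).erase v).card_image_le (f := fun w => ce s(u, w))
    have := ((G.neighborFinset v).erase u).card_image_le (f := fun w => ce s(v, w))
    have : ((G.neighborFinset u).erase v).card = G.degree u - 1 := by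
      rw [Finset.card_erase_of_mem (by simpa using huv), card_neighborFinset_eq_degree]
    have : ((G.neighborFinset v).erase u).card = G.degree v - 1 := by
      rw [Finset.card_erase_of_mem (by simpa using huv.symm), card_neighborFinset_eq_degree]
    have := huv.degree_pos_left
    have := huv.degree_pos_right
    omega
  obtain ⟨a, han, haF⟩ := exists_lt_notMem_of_card_lt hF
  have ha_edge : ∀ ⦃x z⦄, G.Adj x z → s(x, z) ≠ s(u, v) → x = u ∨ x = v → a ≠ ce s(x, z) := by
    rintro x z hxz hne (rfl | rfl) rfl
    · have hz : z ≠ v := by rintro rfl; exact hne rfl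
      exact haF (Finset.mem_insert_of_mem (Finset.mem_union_left _
        (Finset.mem_image_of_mem _ (by simpa [hz] using hxz))))
    · have hz : z ≠ u := by rintro rfl; exact hne Sym2.eq_swap
      exact haF (Finset.mem_insert_of_mem (Finset.mem_union_right _
        (Finset.mem_image_of_mem _ (by simpa [hz] using hxz))))
  have hmem : ∀ ⦃x y⦄, s(x, y) = s(u, v) → x = u ∨ x = v := fun x y h =>
    Sym2.mem_iff.mp (h ▸ Sym2.mem_mk_left x y)
  have hproper : ∀ ⦃x y z⦄, G.Adj x y → G.Adj x z → y ≠ z → s(x, y) = s(u, v) →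
      Function.update ce s(u, v) a s(x, y) ≠ Function.update ce s(u, v) a s(x, z) := by
    intro x y z _ hxz hyz hxy
    have hxz' : s(x, z) ≠ s(u, v) := fun h => hyz (Sym2.congr_right.mp (hxy.trans h.symm))
    simpa [hxy, hxz'] using ha_edge hxz hxz' (hmem hxy)
  refine ⟨a, han, fun x y z hxy hxz hyz => ?_, fun x y hxy hx => ?_⟩
  · by_cases hy : s(x, y) = s(u, v)
    · exact hproper hxy hxz hyz hy
    by_cases hz : s(x, z) = s(u, v)
    · exact (hproper hxz hxy hyz.symm hz).symm
    simpa [hy, hz] using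
      h.2.1 (adj_deleteEdges_singleton_of_ne hxy hy) (adj_deleteEdges_singleton_of_ne hxz hz) hyz
  · by_cases he : s(x, y) = s(u, v)
    · obtain rfl : x = u := (hmem he).resolve_right hx
      have hau : a ≠ cv x := fun h => haF (by rw [h]; exact Finset.mem_insert_self _ _)
      simpa [he] using hau
    simpa [he] using (h.2.2 (adj_deleteEdges_singleton_of_ne hxy he)).1

theorem totalChromaticNumber_le_of_deleteEdge [Finite V] {u v : V} [Fintype (G.neighborSet u)]
    [Fintype (G.neighborSet v)] {n : ℕ} (huv : G.Adj u v)
    (hdel : totalChromaticNumber (G.deleteEdges {s(u, v)}) ≤ n)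
    (hu : G.degree u + G.degree v ≤ n) (hv : 2 * G.degree v < n) :
    totalChromaticNumber G ≤ n := by
  classical
  obtain ⟨cv, ce, hc, hcv, hce⟩ := exists_totalColoring_of_totalChromaticNumber_le hdel
  obtain ⟨a, han, hproper, hinc⟩ := exists_update_isProperEdgeColoring huv hu hc
  have hcv' : ∀ ⦃x y⦄, G.Adj x y → x ≠ v → y ≠ v → cv x ≠ cv y := fun x y hxy hx hy =>
    hc.1 (adj_deleteEdges_singleton_of_ne hxy (by simp [hx, hy]))
  obtain ⟨b, hbn, hcol⟩ := exists_update_isTotalColoring hv hcv' hproper hinc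
  refine totalChromaticNumber_le hcol (fun x => ?_) (fun e he => ?_)
  · rcases eq_or_ne x v with rfl | hx
    · simpa using hbn
    · simpa [hx] using hcv x
  · rcases eq_or_ne e s(u, v) with rfl | he'
    · simpa using han
    · simpa [he'] using hce e (by simpa [edgeSet_deleteEdges] using ⟨he, he'⟩)

end SimpleGraph

theorem minDegree_of_totalCritical_general {V : Type*} [Fintype V] (G : SimpleGraph V)
    [DecidableRel G.Adj] (hconn : G.Connected)
    (k : ℕ) (hkD : k ≤ G.maxDegree)
    (hchi : totalChromaticNumber G = G.maxDegree + k)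
    (hcrit : ∀ e ∈ G.edgeSet,
      totalChromaticNumber (G.deleteEdges {e}) ≤ G.maxDegree + k - 1) :
    ∀ v : V, k ≤ G.degree v := by
  intro v
  by_contra! hv
  have : Nontrivial V := by
    have : Nonempty V := ⟨v⟩
    obtain ⟨w, hw⟩ := G.exists_maximal_degree_vertex
    obtain ⟨w', hww'⟩ := G.degree_pos_iff_exists_adj w |>.mp (by omega)
    exact nontrivial_of_ne w w' hww'.ne
  obtain ⟨u, hvu⟩ := hconn.preconnected.exists_adj_of_nontrivial v
  have hle := totalChromaticNumber_le_of_deleteEdge hvu.symm (hcrit _ hvu.symm)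
    (by have := G.degree_le_maxDegree u; omega) (by omega)
  omega

/-- a connected `(Δ(G)+k)`-total-critical graph on at least `3` vertices with
`2 < k ≤ Δ(G)` has minimum degree at least `k`. -/
theorem minDegree_of_totalCritical {V : Type*} [Fintype V] (G : SimpleGraph V)
    [DecidableRel G.Adj] (hcard : 3 ≤ Fintype.card V) (hconn : G.Connected)
    (k : ℕ) (hk2 : 2 < k) (hkD : k ≤ G.maxDegree)
    (hchi : totalChromaticNumber G = G.maxDegree + k)
    (hcrit : ∀ e ∈ G.edgeSet,
      totalChromaticNumber (G.deleteEdges {e}) ≤ G.maxDegree + k - 1) :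
    ∀ v : V, k ≤ G.degree v :=
  minDegree_of_totalCritical_general G hconn k hkD hchi hcrit
end

section
/- Let G be a 2-vertex-connected simple finite graph and let v be a vertex of G. Then there exists a neighbour w of v such that {v, w} is not a separator of G, i.e., deleting both v and w from G leaves a connected graph. -/
open SimpleGraph

/-!
Suppose that `{v, w}` separates `G` for every neighbour `w` of `v`, and pick a neighbour `w` and
a union `C` of components of `G - {v, w}` (not all of them) with `C` as small as possible.
Since `G - w` is connected, `v` has a neighbour `u ∈ C`, and `G - {v, u}` has a component `D`
avoiding `w`. A path in `G - {v, u}` between `C` and its complement would pass through `w`, so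
either `D ⊆ C`, and then `D ⊊ C` (as `u ∉ D`) contradicts minimality, or `D` misses `C`; then `u`
has no neighbour in `D` (its neighbours lie in `C ∪ {v, w}`), so `v` alone separates `D` from `u`.
-/

namespace SimpleGraph

variable {V : Type*} {G : SimpleGraph V}

/-- `C` is a nonempty union of components of `G - S`, but not all of `G - S`. -/
structure IsFragment (G : SimpleGraph V) (S C : Set V) : Prop where
  nonempty : C.Nonempty
  disjoint : Disjoint C S
  exists_notMem : ∃ b, b ∉ C ∧ b ∉ S
  mem_or_mem_of_adj : ∀ ⦃x y⦄, x ∈ C → G.Adj x y → y ∈ C ∨ y ∈ S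

def componentWithin (G : SimpleGraph V) (s : Set V) (a : s) : Set V :=
  {x | ∃ hx : x ∈ s, (G.induce s).Reachable a ⟨x, hx⟩}

lemma isFragment_componentWithin {S : Set V} {a b : (Sᶜ : Set V)}
    (hab : ¬ (G.induce Sᶜ).Reachable a b) : IsFragment G S (G.componentWithin Sᶜ a) where
  nonempty := ⟨a, a.2, .rfl⟩
  disjoint := Set.disjoint_left.mpr fun _ ⟨hx, _⟩ => hx
  exists_notMem := ⟨b, fun ⟨_, hb⟩ => hab hb, b.2⟩
  mem_or_mem_of_adj x y := by
    rintro ⟨hx, hax⟩ hxy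
    by_cases hy : y ∈ S
    · exact .inr hy
    · exact .inl ⟨hy, hax.trans (induce_adj.mpr hxy).reachable⟩

lemma exists_isFragment_of_not_preconnected {S : Set V} (h : ¬ (G.induce Sᶜ).Preconnected) :
    ∃ C, IsFragment G S C := by
  obtain ⟨a, b, hab⟩ : ∃ a b, ¬ (G.induce Sᶜ).Reachable a b := by simpa [Preconnected] using h
  exact ⟨_, isFragment_componentWithin hab⟩

lemma exists_adj_reachable_of_reachable {S C T : Set V}
    (hC : ∀ ⦃x y⦄, x ∈ C → G.Adj x y → y ∈ C ∨ y ∈ S) {a b : T}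
    (hab : (G.induce T).Reachable a b) (ha : (a : V) ∈ C) (hb : (b : V) ∉ C) :
    ∃ x ∈ C, ∃ y : T, (y : V) ∈ S ∧ G.Adj x y ∧ (G.induce T).Reachable a y := by
  classical
  obtain ⟨p⟩ := hab
  obtain ⟨d, hd, hfst, hsnd⟩ := p.exists_boundary_dart (Subtype.val ⁻¹' C) ha hb
  exact ⟨d.fst, hfst, d.snd, (hC hfst d.adj).resolve_left hsnd, d.adj,
    ⟨p.takeUntil _ (p.dart_snd_mem_support_of_mem_darts hd)⟩⟩

lemma IsFragment.not_preconnected {S C : Set V} (hC : IsFragment G S C) :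
    ¬ (G.induce Sᶜ).Preconnected := by
  intro hpre
  obtain ⟨a, ha⟩ := hC.nonempty
  obtain ⟨b, hbC, hbS⟩ := hC.exists_notMem
  obtain ⟨-, -, y, hyS, -⟩ := exists_adj_reachable_of_reachable hC.mem_or_mem_of_adj
    (hpre ⟨a, hC.disjoint.notMem_of_mem_left ha⟩ ⟨b, hbS⟩) ha hbC
  exact y.2 hyS

lemma componentWithin_subset_or_disjoint {S C T : Set V}
    (hC : ∀ ⦃x y⦄, x ∈ C → G.Adj x y → y ∈ C ∨ y ∈ S) {c : T}
    (hS : ∀ y ∈ S, y ∉ G.componentWithin T c) :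
    G.componentWithin T c ⊆ C ∨ Disjoint (G.componentWithin T c) C := by
  by_cases hc : (c : V) ∈ C
  · refine .inl fun y ⟨_, hcy⟩ => by_contra fun hyC => ?_
    obtain ⟨-, -, z, hzS, -, hcz⟩ := exists_adj_reachable_of_reachable hC hcy hc hyC
    exact hS z hzS ⟨z.2, hcz⟩
  · refine .inr <| Set.disjoint_left.mpr fun y ⟨_, hcy⟩ hyC => ?_
    obtain ⟨-, -, z, hzS, -, hyz⟩ := exists_adj_reachable_of_reachable hC hcy.symm hyC hc
    exact hS z hzS ⟨z.2, hcy.trans hyz⟩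

lemma IsFragment.exists_adj_of_preconnected {v : V} {W C : Set V}
    (hC : IsFragment G (insert v W) C) (hW : (G.induce Wᶜ).Preconnected) :
    ∃ u ∈ C, G.Adj u v := by
  obtain ⟨a, ha⟩ := hC.nonempty
  obtain ⟨b, hbC, hb⟩ := hC.exists_notMem
  have haW : a ∉ W := fun h => hC.disjoint.notMem_of_mem_left ha (.inr h)
  obtain ⟨u, hu, y, hy, huy, -⟩ := exists_adj_reachable_of_reachable hC.mem_or_mem_of_adj
    (hW ⟨a, haW⟩ ⟨b, fun h => hb (.inr h)⟩) ha hbC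
  exact ⟨u, hu, hy.resolve_right y.2 ▸ huy⟩

lemma IsFragment.exists_adj_isFragment_ssubset {v w : V} {C : Set V}
    (hC : IsFragment G {v, w} C) (hvw : v ≠ w) (hv : (G.induce {v}ᶜ).Preconnected)
    (hw : (G.induce {w}ᶜ).Preconnected)
    (hsep : ∀ u, G.Adj v u → ¬ (G.induce {v, u}ᶜ).Preconnected) :
    ∃ u C', G.Adj v u ∧ IsFragment G {v, u} C' ∧ C' ⊂ C := by
  obtain ⟨u, huC, huv⟩ := hC.exists_adj_of_preconnected hw
  have hw' : w ∉ ({v, u} : Set V) := by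
    rintro (rfl | rfl)
    exacts [hvw rfl, hC.disjoint.notMem_of_mem_left huC (.inr rfl)]
  obtain ⟨c, hc⟩ : ∃ c, ¬ (G.induce {v, u}ᶜ).Reachable c ⟨w, hw'⟩ := by
    by_contra! h
    exact hsep u huv.symm fun a b => (h a).trans (h b).symm
  have hD := isFragment_componentWithin hc
  have hwD : w ∉ G.componentWithin _ c := fun ⟨_, h⟩ => hc h
  have hvD : v ∉ G.componentWithin _ c := fun ⟨h, _⟩ => h (.inl rfl)
  rcases componentWithin_subset_or_disjoint hC.mem_or_mem_of_adj
    (by rintro y (rfl | rfl); exacts [hvD, hwD]) with hDC | hDC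
  · exact ⟨u, _, huv.symm, hD, (Set.ssubset_iff_of_subset hDC).mpr
      ⟨u, huC, fun h => hD.disjoint.notMem_of_mem_left h (.inr rfl)⟩⟩
  · have hDv : IsFragment G {v} (G.componentWithin _ c) := by
      refine ⟨hD.nonempty, Set.disjoint_singleton_right.mpr hvD,
        ⟨u, hDC.notMem_of_mem_right huC, huv.ne⟩, fun x y hx hxy => ?_⟩
      rcases hD.mem_or_mem_of_adj hx hxy with h | rfl | rfl
      · exact .inl h
      · exact .inr rfl
      · rcases hC.mem_or_mem_of_adj huC hxy.symm with h | rfl | rfl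
        exacts [absurd h (hDC.notMem_of_mem_left hx), absurd hx hvD, absurd hx hwD]
    exact absurd hv hDv.not_preconnected

lemma not_isFragment_of_forall_not_preconnected [Finite V] {v : V}
    (hdel : ∀ x, (G.induce {x}ᶜ).Preconnected)
    (hsep : ∀ u, G.Adj v u → ¬ (G.induce {v, u}ᶜ).Preconnected) (C : Set V) {w : V}
    (hw : G.Adj v w) : ¬ IsFragment G {v, w} C := by
  induction C using WellFoundedLT.induction generalizing w with
  | ind C ih =>
    intro hC
    obtain ⟨u, C', hu, hC', hC'C⟩ :=
      hC.exists_adj_isFragment_ssubset hw.ne (hdel v) (hdel w) hsep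
    exact ih C' hC'C hu hC'

end SimpleGraph

/-- in a `2`-vertex-connected simple finite graph, every vertex `v` has a
neighbour `w` such that `{v, w}` is not a separator: deleting both leaves a connected
graph. -/
theorem exists_neighbour_not_separator {V : Type*} [Fintype V] (G : SimpleGraph V)
    (h2 : IsKConnected 2 G) (v : V) :
    ∃ w : V, G.Adj v w ∧ (G.induce (({v, w} : Set V)ᶜ)).Connected := by
  classical
  obtain ⟨hcard, hdel⟩ := h2
  have hdel₁ (x : V) : (G.induce {x}ᶜ).Preconnected := by
    have := (hdel {x} (by simp)).preconnected
    rwa [Finset.coe_singleton] at this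
  have hG : G.Preconnected := by
    have := (hdel ∅ (by simp)).preconnected
    rw [Finset.coe_empty, Set.compl_empty, G.induceUnivIso.preconnected_iff] at this
    exact this
  have : Nontrivial V := Fintype.one_lt_card_iff_nontrivial.mp (by omega)
  by_contra! hsep
  have hnot (w : V) (hw : G.Adj v w) : ¬ (G.induce {v, w}ᶜ).Preconnected := by
    intro hpre
    obtain ⟨z, -, hz⟩ := Finset.exists_mem_notMem_of_card_lt_card (s := {v, w})
      (t := Finset.univ) ((Finset.card_le_two).trans_lt hcard)
    exact hsep w hw ((connected_iff _).mpr ⟨hpre, ⟨⟨z, by simpa using hz⟩⟩⟩)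
  obtain ⟨w, hw⟩ := hG.exists_adj_of_nontrivial v
  obtain ⟨C, hC⟩ := exists_isFragment_of_not_preconnected (hnot w hw)
  exact not_isFragment_of_forall_not_preconnected hdel₁ hnot C hw hC
end

section
/- For every simple finite graph G, the total chromatic number satisfies χ''(G) ≤ ch'(G) + 2, where ch'(G) is the edge choosability of G. -/
open SimpleGraph

/-
A total coloring is built in two rounds. The vertices are colored greedily, so `v` gets a
color at most `deg v`; since a `k`-edge-choosable graph has maximum degree at most `k`, these
colors lie below `k + 2`. Each edge then still has at least `k` of the colors below `k + 2`
that avoid both of its endpoints, and `k`-edge-choosability colors the edges from these lists.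
-/

open Finset

namespace SimpleGraph

variable {W α : Type*} [Fintype W] (H : SimpleGraph W) [DecidableRel H.Adj]

theorem exists_listColoring_of_degree_lt [DecidableEq α] (L : W → Finset α)
    (hL : ∀ w, H.degree w < #(L w)) :
    ∃ c : W → α, (∀ w, c w ∈ L w) ∧ ∀ ⦃u v⦄, H.Adj u v → c u ≠ c v := by
  classical
  choose c₀ hc₀ using fun w => card_pos.mp ((Nat.zero_le _).trans_lt (hL w))
  suffices h : ∀ s : Finset W, ∃ c : W → α, (∀ w, c w ∈ L w) ∧
      ∀ ⦃u v⦄, u ∈ s → v ∈ s → H.Adj u v → c u ≠ c v by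
    obtain ⟨c, hcL, hc⟩ := h univ
    exact ⟨c, hcL, fun u v => hc (mem_univ u) (mem_univ v)⟩
  intro s
  induction s using Finset.induction_on with
  | empty => exact ⟨c₀, hc₀, by simp⟩
  | insert a s ha ih =>
    obtain ⟨c, hcL, hc⟩ := ih
    have hfree : (L a \ (H.neighborFinset a).image c).Nonempty := by
      have hused : #((H.neighborFinset a).image c) < #(L a) :=
        card_image_le.trans_lt ((card_neighborFinset_eq_degree H a).symm ▸ hL a)
      exact card_pos.mp (by have := le_card_sdiff ((H.neighborFinset a).image c) (L a); omega)
    obtain ⟨x, hx⟩ := hfree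
    obtain ⟨hxL, hx⟩ := mem_sdiff.mp hx
    refine ⟨Function.update c a x, fun w => ?_, fun u v hu hv huv => ?_⟩
    · rcases eq_or_ne w a with rfl | hw
      · simpa using hxL
      · simpa [hw] using hcL w
    · have hx' : ∀ w, H.Adj a w → c w ≠ x := fun w hw h =>
        hx (mem_image.mpr ⟨w, (mem_neighborFinset H a w).mpr hw, h⟩)
      rw [mem_insert] at hu hv
      rcases eq_or_ne u a with rfl | hua
      · simpa [(H.ne_of_adj huv).symm] using (hx' v huv).symm
      · rcases eq_or_ne v a with rfl | hva
        · simpa [hua] using hx' u huv.symm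
        · simpa [hua, hva] using hc (hu.resolve_left hua) (hv.resolve_left hva) huv

theorem exists_coloring_le_degree :
    ∃ c : W → ℕ, (∀ ⦃u v⦄, H.Adj u v → c u ≠ c v) ∧ ∀ w, c w ≤ H.degree w := by
  obtain ⟨c, hcL, hc⟩ :=
    H.exists_listColoring_of_degree_lt (fun w => range (H.degree w + 1)) (by simp)
  exact ⟨c, hc, fun w => Nat.lt_succ_iff.mp (mem_range.mp (hcL w))⟩

end SimpleGraph

section EdgeChoosable

variable {V : Type*} {G : SimpleGraph V} {k : ℕ}

theorem edgeChoosable_card_edgeSet (G : SimpleGraph V) [Fintype G.edgeSet] :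
    EdgeChoosable G (Fintype.card G.edgeSet) := by
  classical
  intro L hL
  obtain ⟨c, hcL, hc⟩ := (⊤ : SimpleGraph G.edgeSet).exists_listColoring_of_degree_lt
    (fun e => L e) fun e => by
      have := Fintype.card_pos_iff.mpr ⟨e⟩
      rw [complete_graph_degree, hL e e.2]
      omega
  refine ⟨fun e => if he : e ∈ G.edgeSet then c ⟨e, he⟩ else 0,
    fun u v w huv huw hvw => ?_, fun e he => by simpa [he] using hcL ⟨e, he⟩⟩
  simpa [huv, huw] using
    @hc ⟨_, huv⟩ ⟨_, huw⟩ fun h => hvw (Sym2.congr_right.mp (congrArg Subtype.val h))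

theorem edgeChoosable_edgeChoosability [Finite V] (G : SimpleGraph V) :
    EdgeChoosable G (edgeChoosability G) := by
  classical
  have := Fintype.ofFinite V
  exact Nat.sInf_mem (s := {k | EdgeChoosable G k}) ⟨_, edgeChoosable_card_edgeSet G⟩

theorem EdgeChoosable.degree_le (hk : EdgeChoosable G k) (v : V)
    [Fintype (G.neighborSet v)] : G.degree v ≤ k := by
  obtain ⟨c, hc, hcL⟩ := hk (fun _ => range k) (fun _ _ => card_range k)
  rw [← card_neighborFinset_eq_degree, ← card_range k]
  refine card_le_card_of_injOn (fun w => c s(v, w)) (fun w hw => hcL _ ?_)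
    fun w₁ hw₁ w₂ hw₂ h => ?_
  · simpa using hw
  · by_contra hne
    exact hc (by simpa using hw₁) (by simpa using hw₂) hne h

theorem EdgeChoosable.exists_of_le_card (hk : EdgeChoosable G k) (L : Sym2 V → Finset ℕ)
    (hL : ∀ e ∈ G.edgeSet, k ≤ #(L e)) :
    ∃ c, IsProperEdgeColoring G c ∧ ∀ e ∈ G.edgeSet, c e ∈ L e := by
  have hsub : ∀ e, ∃ t ⊆ L e, e ∈ G.edgeSet → #t = k := fun e => by
    by_cases he : e ∈ G.edgeSet
    · obtain ⟨t, hts, ht⟩ := exists_subset_card_eq (hL e he)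
      exact ⟨t, hts, fun _ => ht⟩
    · exact ⟨∅, empty_subset _, fun h => absurd h he⟩
  choose L' hL'L hL'card using hsub
  obtain ⟨c, hc, hcL'⟩ := hk L' hL'card
  exact ⟨c, hc, fun e he => hL'L e (hcL' e he)⟩

theorem EdgeChoosable.exists_isTotalColoring (hk : EdgeChoosable G k) {cv : V → ℕ}
    (hcv : ∀ ⦃u v⦄, G.Adj u v → cv u ≠ cv v) :
    ∃ ce, IsTotalColoring G cv ce ∧ ∀ e ∈ G.edgeSet, ce e < k + 2 := by
  classical
  let S : Sym2 V → Finset ℕ := fun e => (range (k + 2)).filter fun x => ∀ u ∈ e, cv u ≠ x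
  have hS : ∀ e ∈ G.edgeSet, k ≤ #(S e) := by
    rintro ⟨u, v⟩ -
    calc k ≤ #(range (k + 2)) - #{cv u, cv v} := by
          have := card_le_two (a := cv u) (b := cv v)
          rw [card_range]
          omega
      _ ≤ #(range (k + 2) \ {cv u, cv v}) := le_card_sdiff _ _
      _ ≤ #(S s(u, v)) := card_le_card fun x hx => by
          simp only [S, mem_filter, Sym2.mem_iff, forall_eq_or_imp, forall_eq]
          simp only [mem_sdiff, mem_insert, mem_singleton, not_or] at hx
          exact ⟨hx.1, Ne.symm hx.2.1, Ne.symm hx.2.2⟩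
  obtain ⟨ce, hce, hceS⟩ := hk.exists_of_le_card S hS
  refine ⟨ce, ⟨hcv, hce, fun u v huv => ?_⟩, fun e he => ?_⟩
  · have := hceS _ (G.mem_edgeSet.mpr huv)
    simp only [S, mem_filter, Sym2.mem_iff, forall_eq_or_imp, forall_eq] at this
    exact ⟨this.2.1.symm, this.2.2.symm⟩
  · exact mem_range.mp (mem_filter.mp (hceS e he)).1

end EdgeChoosable

/-- for every simple finite graph `G`, `χ''(G) ≤ ch'(G) + 2`, where `ch'(G)`
is the edge choosability of `G`. -/
theorem totalChromaticNumber_le_edgeChoosability_add_two {V : Type*} [Fintype V]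
    (G : SimpleGraph V) :
    totalChromaticNumber G ≤ edgeChoosability G + 2 := by
  classical
  have hk := edgeChoosable_edgeChoosability G
  obtain ⟨cv, hcv, hcv_deg⟩ := G.exists_coloring_le_degree
  obtain ⟨ce, htot, hce⟩ := hk.exists_isTotalColoring hcv
  refine Nat.sInf_le ⟨cv, ce, htot, fun v => ?_, hce⟩
  have := (hcv_deg v).trans (hk.degree_le v)
  omega
end

section
/- Let H be a connected simple finite graph with a vertex v of degree Δ(H) such that H − v is connected. Then the total graph T(H) contains a clique minor of order Δ(H) + 2. -/
open SimpleGraph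

theorem SimpleGraph.Connected.induce_image {V W : Type*} {G : SimpleGraph V} {G' : SimpleGraph W}
    (φ : G →g G') {s : Set V} (hs : (G.induce s).Connected) :
    (G'.induce (φ '' s)).Connected :=
  hs.map (induceHom φ (Set.mapsTo_image φ s)) (Set.surjective_mapsTo_image_restrict φ s)

theorem hasCliqueMinor_card_of_branchSets {W ι : Type*} [Fintype ι] {G : SimpleGraph W}
    (B : ι → Set W) (hne : ∀ i, (B i).Nonempty) (hdisj : Pairwise fun i j => Disjoint (B i) (B j))
    (hconn : ∀ i, (G.induce (B i)).Connected)
    (hadj : Pairwise fun i j => ∃ u ∈ B i, ∃ v ∈ B j, G.Adj u v) :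
    HasCliqueMinor G (Fintype.card ι) :=
  let e := (Fintype.equivFin ι).symm
  ⟨B ∘ e, fun _ => hne _, fun _ _ h => hdisj (e.injective.ne h), fun _ => hconn _,
    fun _ _ h => hadj (e.injective.ne h)⟩

theorem hasCliqueMinor_card_add_one {W ι : Type*} [Fintype ι] {G : SimpleGraph W} {f : ι → W}
    (hf : Pairwise fun i j => G.Adj (f i) (f j)) {S : Set W} (hS : (G.induce S).Connected)
    (hfS : ∀ i, f i ∉ S) (hadj : ∀ i, ∃ y ∈ S, G.Adj (f i) y) :
    HasCliqueMinor G (Fintype.card ι + 1) := by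
  rw [← Fintype.card_option]
  refine hasCliqueMinor_card_of_branchSets (fun o => o.elim S fun i => {f i}) ?_ ?_ ?_ ?_
  · rintro (_ | i)
    exacts [Set.nonempty_coe_sort.mp hS.nonempty, Set.singleton_nonempty _]
  · rintro (_ | i) (_ | j) hij
    · exact absurd rfl hij
    · exact Set.disjoint_singleton_right.mpr (hfS j)
    · exact Set.disjoint_singleton_left.mpr (hfS i)
    · exact Set.disjoint_singleton.mpr (hf (fun h => hij (congrArg some h))).ne
  · rintro (_ | i)
    exacts [hS, show (G.induce {f i}).Connected from .of_subsingleton]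
  · rintro (_ | i) (_ | j) hij
    · exact absurd rfl hij
    · obtain ⟨y, hy, hjy⟩ := hadj j
      exact ⟨y, hy, f j, rfl, hjy.symm⟩
    · obtain ⟨y, hy, hiy⟩ := hadj i
      exact ⟨f i, rfl, y, hy, hiy⟩
    · exact ⟨f i, rfl, f j, rfl, hf (fun h => hij (congrArg some h))⟩

section totalGraph

variable {V : Type*} (H : SimpleGraph V)

theorem totalGraph_adj_inl_inl_s16 {u w : V} :
    (totalGraph H).Adj (Sum.inl u) (Sum.inl w) ↔ H.Adj u w := by
  simp only [totalGraph, fromRel_adj, ne_eq, Sum.inl.injEq]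
  exact ⟨fun ⟨_, h⟩ => h.elim id Adj.symm, fun h => ⟨h.ne, Or.inl h⟩⟩

theorem totalGraph_adj_inl_inr_s16 {u : V} {e : H.edgeSet} (h : u ∈ (e : Sym2 V)) :
    (totalGraph H).Adj (Sum.inl u) (Sum.inr e) := by
  simp only [totalGraph, fromRel_adj]
  exact ⟨Sum.inl_ne_inr, Or.inl h⟩

theorem totalGraph_adj_inr_inr_s16 {e f : H.edgeSet} (hef : e ≠ f) {u : V} (he : u ∈ (e : Sym2 V))
    (hf : u ∈ (f : Sym2 V)) : (totalGraph H).Adj (Sum.inr e) (Sum.inr f) := by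
  simp only [totalGraph, fromRel_adj]
  exact ⟨fun h => hef (Sum.inr_injective h), Or.inl ⟨u, he, hf⟩⟩

def totalGraphInl : H →g totalGraph H :=
  ⟨Sum.inl, (totalGraph_adj_inl_inl_s16 H).mpr⟩

def totalGraphStar (v : V) : Option (H.neighborSet v) → V ⊕ H.edgeSet
  | none => Sum.inl v
  | some u => Sum.inr ⟨s(v, u), u.2⟩

theorem pairwise_adj_totalGraphStar (v : V) :
    Pairwise fun i j => (totalGraph H).Adj (totalGraphStar H v i) (totalGraphStar H v j) := by
  rintro (_ | u) (_ | w) huw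
  · exact absurd rfl huw
  · exact totalGraph_adj_inl_inr_s16 H (Sym2.mem_mk_left _ _)
  · exact (totalGraph_adj_inl_inr_s16 H (Sym2.mem_mk_left _ _)).symm
  · refine totalGraph_adj_inr_inr_s16 H ?_ (Sym2.mem_mk_left _ _) (Sym2.mem_mk_left _ _)
    intro h
    exact huw (congrArg some (Subtype.ext (Sym2.congr_right.mp (congrArg Subtype.val h))))

theorem totalGraphStar_notMem_image_compl (v : V) (i : Option (H.neighborSet v)) :
    totalGraphStar H v i ∉ Sum.inl '' ({v}ᶜ : Set V) := by
  cases i <;> simp [totalGraphStar]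

theorem exists_adj_totalGraphStar {v u₀ : V} (hu₀ : H.Adj v u₀) :
    ∀ i, ∃ y ∈ Sum.inl '' ({v}ᶜ : Set V), (totalGraph H).Adj (totalGraphStar H v i) y
  | none => ⟨Sum.inl u₀, ⟨u₀, hu₀.ne', rfl⟩, (totalGraph_adj_inl_inl_s16 H).mpr hu₀⟩
  | some u => ⟨Sum.inl u, ⟨u, Adj.ne' u.2, rfl⟩,
      (totalGraph_adj_inl_inr_s16 H (Sym2.mem_mk_right _ _)).symm⟩

end totalGraph

/-- The vertex `v` and its `Δ(H)` incident edges form a clique in `T(H)`, and every member of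
it has a neighbour in the connected set `H - v`, which is contracted to one further branch set. -/
theorem totalGraph_hasCliqueMinor_of_maxDegree_vertex {V : Type*} [Fintype V]
    (H : SimpleGraph V) [DecidableRel H.Adj] (hconn : H.Connected) (v : V)
    (hdeg : H.degree v = H.maxDegree)
    (hdel : (H.induce ({v}ᶜ : Set V)).Connected) :
    HasCliqueMinor (totalGraph H) (H.maxDegree + 2) := by
  obtain ⟨⟨w, hw⟩⟩ := hdel.nonempty
  obtain ⟨u, hu⟩ := (hconn v w).nonempty_neighborSet_left (Ne.symm hw)
  have h := hasCliqueMinor_card_add_one (pairwise_adj_totalGraphStar H v)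
    (hdel.induce_image (totalGraphInl H)) (totalGraphStar_notMem_image_compl H v)
    (exists_adj_totalGraphStar H hu)
  rwa [Fintype.card_option, card_neighborSet_eq_degree, hdeg] at h
end
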